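/- arXiv:2001.09593 — 2 statements merged into one kernel-verified Lean document; each statement's English description precedes it below -/
import Mathlib

section
/- Monotonicity of R² in the covariate set: if C is a symmetric positive definite correlation matrix on {0}∪[d] and S ⊆ T ⊆ [d], then R²_S ≤ R²_T, where R²_S = 1 − det(C({0}∪S))/det(C(S)) and C(U) denotes the principal submatrix of C on index set U (with the convention R²_∅ = 0). -/
open Matrix

/-- Determinant of the principal submatrix of `C` on the index set `U`
(the determinant of the empty matrix is `1`). -/
noncomputable def principalDet {d : ℕ} (C : Matrix (Fin (d + 1)) (Fin (d + 1)) ℝ)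
    (U : Finset (Fin (d + 1))) : ℝ :=
  (C.submatrix (fun i : {x // x ∈ U} => (i : Fin (d + 1)))
    (fun i : {x // x ∈ U} => (i : Fin (d + 1)))).det

/-- The coefficient of determination of the response (index `0`) on the covariate set
`S ⊆ [d]` (covariates indexed by `Fin d`, embedded as indices `1,…,d` via `Fin.succ`):
`R²_S = 1 − det C({0} ∪ S) / det C(S)`. For `S = ∅` this equals `0` as `C` has unit
diagonal. -/
noncomputable def R2sub {d : ℕ} (C : Matrix (Fin (d + 1)) (Fin (d + 1)) ℝ)
    (S : Finset (Fin d)) : ℝ :=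
  1 - principalDet C (insert 0 (S.image Fin.succ)) / principalDet C (S.image Fin.succ)

private lemma dot_ext {m n : Type*} [Fintype m] [Fintype n] [DecidableEq n]
    (M : Matrix n n ℝ) (f : m → n) (hf : Function.Injective f) (v : n → ℝ)
    (hv : ∀ j, j ∉ Finset.univ.image f → v j = 0) :
    v ⬝ᵥ M *ᵥ v = (v ∘ f) ⬝ᵥ (M.submatrix f f) *ᵥ (v ∘ f) := by
  have hinj : ∀ x ∈ (Finset.univ : Finset m), ∀ y ∈ Finset.univ, f x = f y → x = y :=
    fun x _ y _ h => hf h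
  have inner : ∀ j, (M *ᵥ v) j = ∑ i : m, M j (f i) * v (f i) := by
    intro j
    rw [mulVec, dotProduct,
      ← Finset.sum_subset (Finset.subset_univ (Finset.univ.image f))
        (fun x _ hx => by rw [hv x hx, mul_zero]),
      Finset.sum_image hinj]
  calc v ⬝ᵥ M *ᵥ v = ∑ j, v j * (M *ᵥ v) j := rfl
    _ = ∑ j ∈ Finset.univ.image f, v j * (M *ᵥ v) j :=
        (Finset.sum_subset (Finset.subset_univ _)
          (fun x _ hx => by rw [hv x hx, zero_mul])).symm
    _ = ∑ i : m, v (f i) * (M *ᵥ v) (f i) := Finset.sum_image hinj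
    _ = ∑ i : m, v (f i) * ∑ i' : m, M (f i) (f i') * v (f i') :=
        Finset.sum_congr rfl fun i _ => by rw [inner]
    _ = (v ∘ f) ⬝ᵥ (M.submatrix f f) *ᵥ (v ∘ f) := by
        simp [dotProduct, mulVec, Function.comp]

private lemma posDef_submatrix_inj {m n : Type*} [Fintype m] [Fintype n] [DecidableEq n]
    {M : Matrix n n ℝ} (hM : M.PosDef) (f : m → n) (hf : Function.Injective f) :
    (M.submatrix f f).PosDef := by
  refine .of_dotProduct_mulVec_pos (hM.1.submatrix f) fun x hx => ?_
  set v : n → ℝ := Function.extend f x (fun _ => 0) with hvdef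
  have hvf : v ∘ f = x := funext fun i => by simp only [hvdef, Function.comp_apply, hf.extend_apply]
  have hv : ∀ j, j ∉ Finset.univ.image f → v j = 0 := by
    intro j hj
    refine Function.extend_apply' _ _ _ ?_
    rintro ⟨a, rfl⟩
    exact hj (Finset.mem_image_of_mem f (Finset.mem_univ a))
  have hvne : v ≠ 0 := by
    obtain ⟨i, hi⟩ := Function.ne_iff.1 hx
    intro h
    apply hi
    have := congrFun hvf i
    rw [h] at this
    simpa using this.symm
  have := hM.dotProduct_mulVec_pos hvne
  rw [star_trivial, dot_ext M f hf v hv, hvf] at this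
  rwa [star_trivial]

private lemma key_lemma {d : ℕ} (M : Matrix (Fin (d + 1)) (Fin (d + 1)) ℝ) (hM : M.PosDef)
    (U : Finset (Fin (d + 1))) (hU : (0 : Fin (d + 1)) ∉ U) :
    (∀ w : Fin (d + 1) → ℝ, w 0 = 1 → (∀ j, j ∉ insert 0 U → w j = 0) →
        principalDet M (insert 0 U) / principalDet M U ≤ w ⬝ᵥ M *ᵥ w) ∧
    (∃ w : Fin (d + 1) → ℝ, w 0 = 1 ∧ (∀ j, j ∉ insert 0 U → w j = 0) ∧
        w ⬝ᵥ M *ᵥ w = principalDet M (insert 0 U) / principalDet M U) := by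
  classical
  set W : Finset (Fin (d + 1)) := insert 0 U with hW
  set c : {x // x ∈ U} → Fin (d + 1) := fun i => (i : Fin (d + 1)) with hc
  set f : Unit ⊕ {x // x ∈ U} → Fin (d + 1) := Sum.elim (fun _ => 0) c with hfdef
  have hf : Function.Injective f := by
    rintro (a | a) (b | b) h
    · rfl
    · simp only [hfdef, Sum.elim_inl, Sum.elim_inr] at h
      exact absurd (show (0 : Fin (d+1)) ∈ U by rw [show (0 : Fin (d+1)) = (b : Fin (d+1)) from h]; exact b.2) hU
    · simp only [hfdef, Sum.elim_inl, Sum.elim_inr] at h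
      exact absurd (show (0 : Fin (d+1)) ∈ U by rw [show (0 : Fin (d+1)) = (a : Fin (d+1)) from h.symm]; exact a.2) hU
    · exact congrArg Sum.inr (Subtype.ext h)
  have hmem : ∀ a, f a ∈ W := by
    rintro (a | a)
    · exact Finset.mem_insert_self _ _
    · exact Finset.mem_insert_of_mem a.2
  have himage : ∀ j, j ∈ Finset.univ.image f ↔ j ∈ W := by
    intro j
    simp only [Finset.mem_image, Finset.mem_univ, true_and]
    constructor
    · rintro ⟨a, rfl⟩; exact hmem a
    · intro hj
      rcases Finset.mem_insert.1 hj with h0 | h0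
      · exact ⟨Sum.inl (), h0.symm⟩
      · exact ⟨Sum.inr ⟨j, h0⟩, rfl⟩
  set A : Matrix Unit Unit ℝ := Matrix.of fun _ _ => M 0 0 with hA
  set B : Matrix Unit {x // x ∈ U} ℝ := Matrix.of fun _ j => M 0 (c j) with hB
  set D : Matrix {x // x ∈ U} {x // x ∈ U} ℝ := M.submatrix c c with hD
  have hsym : ∀ i j, M j i = M i j := fun i j => by
    have := congrFun (congrFun hM.1 i) j
    simpa using this
  have hblock : M.submatrix f f = Matrix.fromBlocks A B Bᴴ D := by
    ext i j
    cases i with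
    | inl u => cases j with
      | inl v => rfl
      | inr v => rfl
    | inr u => cases j with
      | inl v =>
        show M (c u) 0 = Bᴴ u v
        simp [hB, hsym]
      | inr v => rfl
  have hDpd : D.PosDef := posDef_submatrix_inj hM c Subtype.val_injective
  haveI : Invertible D := D.invertibleOfIsUnitDet (isUnit_iff_ne_zero.2 hDpd.det_pos.ne')
  have hDdet : D.det = principalDet M U := rfl
  -- the equiv between the sum type and the subtype of W
  have h0U : ((0 : Fin (d+1)) ∈ U) = False := eq_false hU
  set e : (Unit ⊕ {x // x ∈ U}) ≃ {x // x ∈ W} :=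
    { toFun := fun a => ⟨f a, hmem a⟩
      invFun := fun x => if h : (x : Fin (d + 1)) ∈ U then Sum.inr ⟨x, h⟩ else Sum.inl ()
      left_inv := by
        rintro (a | a)
        · simp [hfdef, hU]
        · simp [hfdef, hc]
      right_inv := by
        rintro ⟨x, hx⟩
        by_cases h : x ∈ U
        · simp [h, hfdef, hc]
        · have hx0 : x = 0 := by
            rcases Finset.mem_insert.1 hx with h0 | h0
            · exact h0
            · exact absurd h0 h
          subst hx0
          simp [hU, hfdef] } with he
  have hdetF : (M.submatrix f f).det = principalDet M W := by
    have hcomp : M.submatrix f f =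
        (M.submatrix (fun x : {x // x ∈ W} => (x : Fin (d + 1)))
          (fun x : {x // x ∈ W} => (x : Fin (d + 1)))).submatrix e e := rfl
    rw [hcomp, Matrix.det_submatrix_equiv_self]
    rfl
  set Sc : Matrix Unit Unit ℝ := A - B * D⁻¹ * Bᴴ with hSc
  have hUpos : (0 : ℝ) < principalDet M U := by rw [← hDdet]; exact hDpd.det_pos
  have hWdet : principalDet M W = principalDet M U * Sc () () := by
    rw [← hdetF, hblock, Matrix.det_fromBlocks₂₂, Matrix.invOf_eq_nonsing_inv, hDdet,
      Matrix.det_unique]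
  have hSval : Sc () () = principalDet M W / principalDet M U := by
    rw [hWdet, mul_div_cancel_left₀ _ hUpos.ne']
  -- quadratic form identity
  have quad : ∀ y : {x // x ∈ U} → ℝ,
      (Sum.elim (fun _ : Unit => (1 : ℝ)) y) ⬝ᵥ
        (Matrix.fromBlocks A B Bᴴ D) *ᵥ (Sum.elim (fun _ : Unit => (1 : ℝ)) y) =
      (((D⁻¹ * Bᴴ) *ᵥ (fun _ => 1) + y) ⬝ᵥ D *ᵥ ((D⁻¹ * Bᴴ) *ᵥ (fun _ => 1) + y)) + Sc () () := by
    intro y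
    have h := Matrix.schur_complement_eq₂₂ (α := ℝ) A B (fun _ : Unit => (1 : ℝ)) y hDpd.1
    simp only [star_trivial] at h
    have hterm : ((fun _ : Unit => (1 : ℝ)) ᵥ* (A - B * D⁻¹ * Bᴴ)) ⬝ᵥ (fun _ => (1 : ℝ))
        = Sc () () := by
      simp [vecMul, dotProduct, hSc]
    rw [Matrix.dotProduct_mulVec, h, hterm, ← Matrix.dotProduct_mulVec]
  constructor
  · intro w hw0 hwsupp
    have hsupp' : ∀ j, j ∉ Finset.univ.image f → w j = 0 := fun j hj =>
      hwsupp j (fun h => hj ((himage j).2 h))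
    have hwf : w ∘ f = Sum.elim (fun _ : Unit => (1 : ℝ)) (fun i => w (c i)) := by
      funext a
      cases a with
      | inl u => exact hw0
      | inr u => rfl
    rw [dot_ext M f hf w hsupp', hblock, hwf, quad, hSval]
    have h1 : 0 ≤ (((D⁻¹ * Bᴴ) *ᵥ (fun _ => 1) + (fun i => w (c i))) ⬝ᵥ
        D *ᵥ ((D⁻¹ * Bᴴ) *ᵥ (fun _ => 1) + (fun i => w (c i)))) := by
      have := hDpd.posSemidef.dotProduct_mulVec_nonneg ((D⁻¹ * Bᴴ) *ᵥ (fun _ => 1) + (fun i => w (c i)))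
      rwa [star_trivial] at this
    linarith
  · set y₀ : {x // x ∈ U} → ℝ := -((D⁻¹ * Bᴴ) *ᵥ (fun _ => 1)) with hy₀
    set w : Fin (d + 1) → ℝ := fun j =>
      if h : j ∈ W then Sum.elim (fun _ : Unit => (1 : ℝ)) y₀ (e.symm ⟨j, h⟩) else 0 with hwdef
    have h0W : (0 : Fin (d + 1)) ∈ W := Finset.mem_insert_self _ _
    have hw0 : w 0 = 1 := by
      rw [hwdef]
      simp only [dif_pos h0W]
      simp [he, hU]
    have hwsupp : ∀ j, j ∉ W → w j = 0 := fun j hj => dif_neg hj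
    refine ⟨w, hw0, hwsupp, ?_⟩
    have hsupp' : ∀ j, j ∉ Finset.univ.image f → w j = 0 := fun j hj =>
      hwsupp j (fun h => hj ((himage j).2 h))
    have hwf : w ∘ f = Sum.elim (fun _ : Unit => (1 : ℝ)) y₀ := by
      funext a
      have : w (f a) = Sum.elim (fun _ : Unit => (1 : ℝ)) y₀ (e.symm ⟨f a, hmem a⟩) :=
        dif_pos (hmem a)
      have he2 : e.symm ⟨f a, hmem a⟩ = a := e.symm_apply_apply a
      simp only [Function.comp_apply, this, he2]
    rw [dot_ext M f hf w hsupp', hblock, hwf, quad, hSval]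
    simp [hy₀]

private lemma ratio_anti {d : ℕ} (M : Matrix (Fin (d + 1)) (Fin (d + 1)) ℝ) (hM : M.PosDef)
    (U V : Finset (Fin (d + 1))) (hU : (0 : Fin (d + 1)) ∉ U) (hV : (0 : Fin (d + 1)) ∉ V)
    (hUV : U ⊆ V) :
    principalDet M (insert 0 V) / principalDet M V ≤
      principalDet M (insert 0 U) / principalDet M U := by
  obtain ⟨w, hw0, hsupp, hval⟩ := (key_lemma M hM U hU).2
  have hsupp' : ∀ j, j ∉ insert 0 V → w j = 0 := by
    intro j hj
    refine hsupp j (fun h => hj ?_)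
    rcases Finset.mem_insert.1 h with h0 | h0
    · exact h0 ▸ Finset.mem_insert_self _ _
    · exact Finset.mem_insert_of_mem (hUV h0)
  have hle := (key_lemma M hM V hV).1 w hw0 hsupp'
  rw [hval] at hle
  exact hle

/-- Monotonicity of `R²` in the covariate set: if `C` is a symmetric positive definite
correlation matrix on `{0} ∪ [d]` and `S ⊆ T ⊆ [d]`, then `R²_S ≤ R²_T`. -/
theorem R2_monotone (d : ℕ) (C : Matrix (Fin (d + 1)) (Fin (d + 1)) ℝ)
    (hC : C.PosDef) (hdiag : ∀ i, C i i = 1)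
    (S T : Finset (Fin d)) (hST : S ⊆ T) :
    R2sub C S ≤ R2sub C T := by
  have h0 : ∀ (X : Finset (Fin d)), (0 : Fin (d + 1)) ∉ X.image Fin.succ := by
    intro X h
    obtain ⟨a, -, ha⟩ := Finset.mem_image.1 h
    exact Fin.succ_ne_zero a ha
  have := ratio_anti C hC (S.image Fin.succ) (T.image Fin.succ) (h0 S) (h0 T)
    (Finset.image_subset_image hST)
  simpa only [R2sub] using sub_le_sub_left this 1
end

section
/- Each Shapley value of the R² decomposition is nonnegative and at most R²: if C is a symmetric positive definite correlation matrix on {0}∪[d] and V_j = ∑_{S ⊆ [d]\{j}} ω(S)·[R²_{{j}∪S} − R²_S] with ω(S) = |S|!(d−|S|−1)!/d! and R²_S = 1 − det(C({0}∪S))/det(C(S)), then 0 ≤ V_j for every j ∈ [d]. -/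
open Matrix Function

theorem dot_submatrix {m n : Type*} [Fintype m] [Fintype n] [DecidableEq n]
    (C : Matrix n n ℝ) (f : m → n) (hf : Function.Injective f) (x : m → ℝ) :
    x ⬝ᵥ (C.submatrix f f) *ᵥ x = (Function.extend f x 0) ⬝ᵥ C *ᵥ (Function.extend f x 0) := by
  classical
  set y := Function.extend f x 0 with hy
  have hyf : ∀ i, y (f i) = x i := fun i => hf.extend_apply x 0 i
  have hy0 : ∀ j, j ∉ Finset.univ.image f → y j = 0 := by
    intro j hj
    rw [hy, Function.extend_apply']
    · rfl
    · rintro ⟨i, rfl⟩; exact hj (Finset.mem_image.2 ⟨i, Finset.mem_univ _, rfl⟩)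
  unfold dotProduct Matrix.mulVec dotProduct
  rw [show (∑ j, y j * ∑ j', C j j' * y j') = ∑ j ∈ Finset.univ.image f, y j * ∑ j', C j j' * y j' from
    (Finset.sum_subset (Finset.subset_univ _) (fun j _ hj => by rw [hy0 j hj, zero_mul])).symm]
  rw [Finset.sum_image (fun a _ b _ h => hf h)]
  refine Finset.sum_congr rfl fun i _ => ?_
  rw [hyf]
  congr 1
  rw [show (∑ j', C (f i) j' * y j') = ∑ j' ∈ Finset.univ.image f, C (f i) j' * y j' from
    (Finset.sum_subset (Finset.subset_univ _) (fun j _ hj => by rw [hy0 j hj, mul_zero])).symm]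
  rw [Finset.sum_image (fun a _ b _ h => hf h)]
  simp [Matrix.submatrix, hyf]

theorem posdef_submatrix {m n : Type*} [Fintype m] [Fintype n] [DecidableEq m] [DecidableEq n]
    {C : Matrix n n ℝ} (hC : C.PosDef) (f : m → n) (hf : Function.Injective f) :
    (C.submatrix f f).PosDef := by
  refine Matrix.posDef_iff_dotProduct_mulVec.2 ⟨?_, ?_⟩
  · have h := hC.isHermitian
    unfold Matrix.IsHermitian at *
    ext i j
    simp [Matrix.conjTranspose_apply, Matrix.submatrix_apply]
    exact congrFun (congrFun h (f j)) (f i) ▸ by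
      simpa using congrFun (congrFun h.symm (f i)) (f j)
  · intro x hx
    have hsx : star x = x := rfl
    rw [hsx, dot_submatrix C f hf]
    have hne : Function.extend f x 0 ≠ 0 := by
      intro h
      apply hx
      funext i
      have := congrFun h (f i)
      rwa [hf.extend_apply] at this
    have := hC.dotProduct_mulVec_pos hne
    rwa [show star (Function.extend f x 0) = Function.extend f x 0 from rfl] at this

theorem cofactor_eq {n : Type*} [Fintype n] [DecidableEq n]
    (A : Matrix n n ℝ) (i : n) :
    A.adjugate i i = (A.submatrix (Subtype.val : {x // x ≠ i} → n) Subtype.val).det := by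
  classical
  obtain ⟨m, ⟨e'⟩⟩ : ∃ m, Nonempty ({x // x ≠ i} ≃ Fin m) := ⟨_, ⟨Fintype.equivFin _⟩⟩
  let e : Fin (m+1) ≃ n :=
    ((finSuccEquiv m).trans ((e'.symm.optionCongr).trans (Equiv.optionSubtypeNe i)))
  have he0 : e 0 = i := by simp [e, ← Equiv.optionCongr_symm]
  have hes : ∀ k : Fin m, e k.succ = (e'.symm k : n) := by intro k; simp [e, ← Equiv.optionCongr_symm]
  have h1 : A.adjugate i i = (A.submatrix e e).adjugate 0 0 := by
    rw [Matrix.adjugate_submatrix_equiv_self]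
    simp [he0]
  rw [h1, Matrix.adjugate_fin_succ_eq_det_submatrix]
  simp only [Fin.val_zero, pow_zero, one_mul]
  have : (A.submatrix e e).submatrix (Fin.succAbove 0) (Fin.succAbove 0)
      = (A.submatrix (Subtype.val : {x // x ≠ i} → n) Subtype.val).submatrix e'.symm e'.symm := by
    ext a b
    simp [Fin.succAbove, hes]
  rw [this, Matrix.det_submatrix_equiv_self]
  norm_num


theorem inv_diag_pos {n : Type*} [Fintype n] [DecidableEq n] {M : Matrix n n ℝ}
    (hM : M.PosDef) (i : n) : 0 < M⁻¹ i i := by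
  have h := (hM.inv).dotProduct_mulVec_pos (x := Pi.single i 1) (by
    intro h; have := congrFun h i; simp [Pi.single_eq_same] at this)
  have heq : star (Pi.single i 1 : n → ℝ) ⬝ᵥ M⁻¹ *ᵥ Pi.single i 1 = M⁻¹ i i := by
    simp [dotProduct, Matrix.mulVec, Pi.single_apply]
  rwa [heq] at h

theorem quad_lower {n : Type*} [Fintype n] [DecidableEq n] {M : Matrix n n ℝ}
    (hM : M.PosDef) (i : n) (v : n → ℝ) (hv : v i = 1) :
    1 / M⁻¹ i i ≤ v ⬝ᵥ M *ᵥ v := by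
  classical
  have hdet : IsUnit M.det := (isUnit_iff_ne_zero).2 (ne_of_gt hM.det_pos)
  have hMi : (0:ℝ) < M⁻¹ i i := inv_diag_pos hM i
  set x : n → ℝ := M⁻¹ *ᵥ Pi.single i 1 with hx
  have hMx : M *ᵥ x = Pi.single i 1 := by
    rw [hx, Matrix.mulVec_mulVec, Matrix.mul_nonsing_inv _ hdet, Matrix.one_mulVec]
  have hxi : x i = M⁻¹ i i := by
    simp [hx, Matrix.mulVec, dotProduct, Pi.single_apply]
  set c : ℝ := (M⁻¹ i i)⁻¹ with hc
  set w : n → ℝ := v - c • x with hw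
  have hwi : w i = 0 := by
    simp [hw, hv, hxi, hc, inv_mul_cancel₀ (ne_of_gt hMi)]
  have hvw : v = w + c • x := by rw [hw]; abel
  have hsym : Mᵀ = M := by
    have h := hM.isHermitian; unfold Matrix.IsHermitian at h
    simpa using h
  have hwMx : w ⬝ᵥ M *ᵥ x = 0 := by rw [hMx, dotProduct_single, hwi]; ring
  have hxMw : x ⬝ᵥ M *ᵥ w = 0 := by
    rw [Matrix.dotProduct_mulVec, ← Matrix.mulVec_transpose, hsym, hMx]
    rw [single_dotProduct, hwi]; ring
  have hxMx : x ⬝ᵥ M *ᵥ x = M⁻¹ i i := by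
    rw [hMx, dotProduct_single, hxi]; ring
  have hwMw : 0 ≤ w ⬝ᵥ M *ᵥ w := by
    rcases eq_or_ne w 0 with h | h
    · simp [h]
    · have h2 := hM.dotProduct_mulVec_pos h
      rw [show star w = w from rfl] at h2
      exact le_of_lt h2
  have expand : v ⬝ᵥ M *ᵥ v = w ⬝ᵥ M *ᵥ w + c := by
    rw [hvw]
    simp only [add_dotProduct, Matrix.mulVec_add, dotProduct_add,
      Matrix.mulVec_smul, dotProduct_smul, smul_dotProduct,
      hwMx, hxMw, hxMx, smul_eq_mul]
    rw [hc]; field_simp; ring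
  rw [expand, hc, one_div]
  linarith

theorem quad_attain {n : Type*} [Fintype n] [DecidableEq n] {M : Matrix n n ℝ}
    (hM : M.PosDef) (i : n) :
    ∃ v : n → ℝ, v i = 1 ∧ v = (M⁻¹ i i)⁻¹ • (M⁻¹ *ᵥ Pi.single i 1) ∧
      v ⬝ᵥ M *ᵥ v = 1 / M⁻¹ i i := by
  classical
  have hdet : IsUnit M.det := (isUnit_iff_ne_zero).2 (ne_of_gt hM.det_pos)
  have hMi : (0:ℝ) < M⁻¹ i i := inv_diag_pos hM i
  set x : n → ℝ := M⁻¹ *ᵥ Pi.single i 1 with hx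
  have hMx : M *ᵥ x = Pi.single i 1 := by
    rw [hx, Matrix.mulVec_mulVec, Matrix.mul_nonsing_inv _ hdet, Matrix.one_mulVec]
  have hxi : x i = M⁻¹ i i := by
    simp [hx, Matrix.mulVec, dotProduct, Pi.single_apply]
  refine ⟨(M⁻¹ i i)⁻¹ • x, ?_, rfl, ?_⟩
  · simp only [Pi.smul_apply, smul_eq_mul]
    rw [hxi, inv_mul_cancel₀ (ne_of_gt hMi)]
  · rw [smul_dotProduct, Matrix.mulVec_smul, dotProduct_smul]
    rw [show x ⬝ᵥ M *ᵥ x = M⁻¹ i i from by rw [hMx, dotProduct_single, hxi, mul_one]]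
    simp only [smul_eq_mul]
    field_simp

section
variable {d : ℕ} (C : Matrix (Fin (d + 1)) (Fin (d + 1)) ℝ)

/-- The principal submatrix of `C` on `W`, as a matrix indexed by the subtype. -/
noncomputable def subM (W : Finset (Fin (d+1))) : Matrix {x // x ∈ W} {x // x ∈ W} ℝ :=
  C.submatrix (fun i : {x // x ∈ W} => (i : Fin (d + 1)))
    (fun i : {x // x ∈ W} => (i : Fin (d + 1)))

theorem ratio_eq (U : Finset (Fin (d+1))) (h0 : (0 : Fin (d+1)) ∉ U) (hC : C.PosDef) :
    1 / ((subM C (insert 0 U))⁻¹ ⟨0, Finset.mem_insert_self _ _⟩ ⟨0, Finset.mem_insert_self _ _⟩)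
      = principalDet C (insert 0 U) / principalDet C U := by
  classical
  set W := insert (0 : Fin (d+1)) U with hW
  set M := subM C W with hM
  set i₀ : {x // x ∈ W} := ⟨0, Finset.mem_insert_self _ _⟩ with hi₀
  have hMpd : M.PosDef := posdef_submatrix hC _ Subtype.val_injective
  have hdetM : M.det = principalDet C W := rfl
  have hadj : M.adjugate i₀ i₀ = principalDet C U := by
    rw [cofactor_eq]
    let e : {x // x ∈ U} ≃ {x : {y // y ∈ W} // x ≠ i₀} :=
      { toFun := fun a => ⟨⟨a.1, Finset.mem_insert_of_mem a.2⟩, by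
          intro h
          have h2 : (a : Fin (d+1)) = 0 := congrArg Subtype.val h
          exact h0 (h2 ▸ a.2)⟩
        invFun := fun b => ⟨b.1.1, by
          have hb := b.1.2
          rcases Finset.mem_insert.1 hb with h | h
          · exact absurd (Subtype.ext (by exact h)) b.2
          · exact h⟩
        left_inv := fun a => rfl
        right_inv := fun b => rfl }
    have : (M.submatrix (Subtype.val : {x // x ≠ i₀} → _) Subtype.val).submatrix e e
        = C.submatrix (fun i : {x // x ∈ U} => (i : Fin (d + 1)))
            (fun i : {x // x ∈ U} => (i : Fin (d + 1))) := rfl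
    rw [← Matrix.det_submatrix_equiv_self e, this]
    rfl
  have hdetpos : (0:ℝ) < M.det := hMpd.det_pos
  have hinv : M⁻¹ i₀ i₀ = (M.det)⁻¹ * M.adjugate i₀ i₀ := by
    rw [Matrix.inv_def, Ring.inverse_eq_inv]
    simp [Matrix.smul_apply]
  have hUpos : (0:ℝ) < principalDet C U :=
    (posdef_submatrix hC (fun i : {x // x ∈ U} => (i : Fin (d+1))) Subtype.val_injective).det_pos
  have hWpos : (0:ℝ) < principalDet C W := hdetM ▸ hdetpos
  rw [hinv, hadj, hdetM, ← hW]
  rw [one_div, mul_inv, inv_inv, div_eq_mul_inv, mul_comm]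

theorem le_ratio (U : Finset (Fin (d+1))) (h0 : (0 : Fin (d+1)) ∉ U) (hC : C.PosDef)
    (v : Fin (d+1) → ℝ) (hv0 : v 0 = 1) (hsupp : ∀ x ∉ insert (0:Fin (d+1)) U, v x = 0) :
    principalDet C (insert 0 U) / principalDet C U ≤ v ⬝ᵥ C *ᵥ v := by
  classical
  set W := insert (0 : Fin (d+1)) U with hW
  set f : {x // x ∈ W} → Fin (d+1) := Subtype.val with hf
  have hfi : Function.Injective f := Subtype.val_injective
  set x : {x // x ∈ W} → ℝ := v ∘ f with hx
  have hext : Function.extend f x 0 = v := by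
    funext t
    by_cases ht : t ∈ W
    · have : t = f ⟨t, ht⟩ := rfl
      rw [this, hfi.extend_apply]
      rfl
    · rw [Function.extend_apply']
      · exact (hsupp t ht).symm
      · rintro ⟨a, rfl⟩; exact ht a.2
  have hMpd : (subM C W).PosDef := posdef_submatrix hC _ Subtype.val_injective
  set i₀ : {x // x ∈ W} := ⟨0, Finset.mem_insert_self _ _⟩ with hi₀
  have h1 : x i₀ = 1 := hv0
  have h2 := quad_lower hMpd i₀ x h1
  rw [ratio_eq C U h0 hC] at h2
  calc principalDet C (insert 0 U) / principalDet C U ≤ x ⬝ᵥ (subM C W) *ᵥ x := h2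
    _ = v ⬝ᵥ C *ᵥ v := by rw [show subM C W = C.submatrix f f from rfl,
        dot_submatrix C f hfi x, hext]

theorem exists_ratio (U : Finset (Fin (d+1))) (h0 : (0 : Fin (d+1)) ∉ U) (hC : C.PosDef) :
    ∃ v : Fin (d+1) → ℝ, v 0 = 1 ∧ (∀ x ∉ insert (0:Fin (d+1)) U, v x = 0) ∧
      v ⬝ᵥ C *ᵥ v = principalDet C (insert 0 U) / principalDet C U := by
  classical
  set W := insert (0 : Fin (d+1)) U with hW
  set f : {x // x ∈ W} → Fin (d+1) := Subtype.val with hf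
  have hfi : Function.Injective f := Subtype.val_injective
  have hMpd : (subM C W).PosDef := posdef_submatrix hC _ Subtype.val_injective
  set i₀ : {x // x ∈ W} := ⟨0, Finset.mem_insert_self _ _⟩ with hi₀
  obtain ⟨xv, hxv1, -, hxvq⟩ := quad_attain hMpd i₀
  refine ⟨Function.extend f xv 0, ?_, ?_, ?_⟩
  · have : (0 : Fin (d+1)) = f i₀ := rfl
    rw [this, hfi.extend_apply]
    exact hxv1
  · intro t ht
    rw [Function.extend_apply']
    · rfl
    · rintro ⟨a, rfl⟩; exact ht a.2
  · rw [← dot_submatrix C f hfi xv]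
    rw [show C.submatrix f f = subM C W from rfl, hxvq, ratio_eq C U h0 hC]

theorem ratio_mono {U U' : Finset (Fin (d+1))} (hUU : U ⊆ U')
    (h0' : (0 : Fin (d+1)) ∉ U') (hC : C.PosDef) :
    principalDet C (insert 0 U') / principalDet C U'
      ≤ principalDet C (insert 0 U) / principalDet C U := by
  have h0 : (0 : Fin (d+1)) ∉ U := fun h => h0' (hUU h)
  obtain ⟨v, hv0, hsupp, hq⟩ := exists_ratio C U h0 hC
  have := le_ratio C U' h0' hC v hv0 (fun x hx => hsupp x
    (fun hmem => hx (Finset.insert_subset_insert _ hUU hmem)))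
  rw [hq] at this
  exact this

end


/-- Each Shapley value of the `R²` decomposition is nonnegative: with
`V_j = ∑_{S ⊆ [d]\{j}} ω(S) (R²_{{j}∪S} − R²_S)`, `ω(S) = |S|!(d−|S|−1)!/d!`, we have
`0 ≤ V_j` for every `j ∈ [d]`. -/
theorem shapley_R2_nonneg (d : ℕ) (C : Matrix (Fin (d + 1)) (Fin (d + 1)) ℝ)
    (hC : C.PosDef) (hdiag : ∀ i, C i i = 1) (j : Fin d) :
    0 ≤ ∑ S ∈ (Finset.univ.erase j).powerset,
        ((Nat.factorial S.card * Nat.factorial (d - S.card - 1) : ℝ) / (Nat.factorial d : ℝ))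
          * (R2sub C (insert j S) - R2sub C S) := by
  classical
  apply Finset.sum_nonneg
  intro S _
  apply mul_nonneg
  · apply div_nonneg
    · positivity
    · positivity
  · set T : Finset (Fin (d+1)) := S.image Fin.succ with hT
    have himg : (insert j S).image Fin.succ = insert j.succ T := Finset.image_insert _ _ _
    have hTT : T ⊆ insert j.succ T := Finset.subset_insert _ _
    have h0' : (0 : Fin (d+1)) ∉ insert j.succ T := by
      rw [Finset.mem_insert]
      rintro (h | h)
      · exact (Fin.succ_ne_zero j) h.symm
      · obtain ⟨a, -, ha⟩ := Finset.mem_image.1 h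
        exact (Fin.succ_ne_zero a) ha
    have hmono := ratio_mono C hTT h0' hC
    rw [R2sub, R2sub, himg]
    linarith
end
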